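/- For every paracel γ ⊆ E^{ef}, there exists exactly one pair (β, d) with β ⊆ E^{ef} disjoint from γ and d ∈ B_{β,γ} such that the exponent vector 1_β + 1_γ + d : E → ℕ takes the value 1 at every edge of E^{ef} and the value 0 at e and at f. -/

import Mathlib

open Finset

section Defs

variable {V : Type*} {E : Type*}

/-- The graph on vertex set `V` whose adjacency is given by the edges in `F`
(a loop joins nothing). -/
def etaGraph (ends : E → Sym2 V) (F : Finset E) : SimpleGraph V where
  Adj v w := v ≠ w ∧ ∃ g ∈ F, ends g = s(v, w)
  symm := by
    constructor
    rintro v w ⟨hvw, g, hg, hends⟩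
    exact ⟨hvw.symm, g, hg, by rw [hends, Sym2.eq_swap]⟩
  loopless := by constructor; rintro v ⟨h, -⟩; exact h rfl

/-- `k(F)`: the number of connected components of `η(F)`. -/
noncomputable def kComp (ends : E → Sym2 V) (F : Finset E) : ℕ :=
  Nat.card (etaGraph ends F).ConnectedComponent

/-- The edge with endpoint pair `s` joins the connected component of `a`
with that of `b` in the graph `G`. -/
def Joins (G : SimpleGraph V) (s : Sym2 V) (a b : V) : Prop :=
  ∃ u v : V, s = s(u, v) ∧ G.Reachable a u ∧ G.Reachable b v

/-- `F ⊆ E^{ef}` is a paracel if `e` and `f` each join the same two distinct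
connected components of `η(F)`. -/
def IsParacel (ends : E → Sym2 V) (e f : E) (F : Finset E) : Prop :=
  e ∉ F ∧ f ∉ F ∧ ∃ a b : V,
    ¬ (etaGraph ends F).Reachable a b ∧
    Joins (etaGraph ends F) (ends e) a b ∧
    Joins (etaGraph ends F) (ends f) a b

/-- `g ∈ E^{ef} ∖ F` is a smoot for the paracel `F` if it joins the same two
connected components of `η(F)` as `e` and `f` do. -/
def IsSmoot (ends : E → Sym2 V) (e f : E) (F : Finset E) (g : E) : Prop :=
  g ∉ F ∧ g ≠ e ∧ g ≠ f ∧ ∃ a b : V,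
    ¬ (etaGraph ends F).Reachable a b ∧
    Joins (etaGraph ends F) (ends e) a b ∧
    Joins (etaGraph ends F) (ends f) a b ∧
    Joins (etaGraph ends F) (ends g) a b

variable [DecidableEq E]

/-- `α` is compatible with `(β, γ)`. -/
def Compatible (ends : E → Sym2 V) (e f : E) (β γ α : Finset E) : Prop :=
  e ∉ α ∧ f ∉ α ∧ Disjoint α β ∧ Disjoint α γ ∧
    IsParacel ends e f (γ ∪ α) ∧ ∀ g ∈ β, IsSmoot ends e f (γ ∪ α) g

/-- indicator function of a finite edge set, as an exponent vector. -/
def indic (A : Finset E) : E → ℕ := fun g => if g ∈ A then 1 else 0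

/-- `B_{β,γ}` as a set of exponent vectors `1_α + 1_{α'}` for twins `α, α'`. -/
def Bset (ends : E → Sym2 V) (e f : E) (β γ : Finset E) : Set (E → ℕ) :=
  { d | ∃ α α' : Finset E,
      Compatible ends e f β γ α ∧ Compatible ends e f β γ α' ∧
      Compatible ends e f β γ (α ∩ α') ∧ d = indic α + indic α' }

/-- `x^F = ∏_{g ∈ F} x_g`. -/
noncomputable def xF (A : Finset E) : MvPolynomial E ℤ := ∏ g ∈ A, MvPolynomial.X g

variable [Fintype E]

/-- `E^{ef} = E ∖ {e, f}`. -/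
def Eef (e f : E) : Finset E := Finset.univ \ {e, f}

/-- `x^d = ∏_g x_g^{d g}` for an exponent vector `d`. -/
noncomputable def xPow (d : E → ℕ) : MvPolynomial E ℤ := ∏ g : E, MvPolynomial.X g ^ d g

/-- `B_{β,γ}` as a finite set of exponent vectors, each counted once. -/
noncomputable def Bfin (ends : E → Sym2 V) (e f : E) (β γ : Finset E) :
    Finset (E → ℕ) := by
  classical
  exact (Finset.univ.filter (fun p : Finset E × Finset E =>
      Compatible ends e f β γ p.1 ∧ Compatible ends e f β γ p.2 ∧
      Compatible ends e f β γ (p.1 ∩ p.2))).image fun p => indic p.1 + indic p.2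

/-- `T_A^B = Σ_{A ⊆ F, F ∩ B = ∅} x^F q^{k(F)}` in `R = (MvPolynomial E ℤ)[q]`. -/
noncomputable def Tab (ends : E → Sym2 V) (A B : Finset E) :
    Polynomial (MvPolynomial E ℤ) :=
  ∑ F ∈ Finset.univ.filter (fun F : Finset E => A ⊆ F ∧ F ∩ B = ∅),
    Polynomial.C (xF F) * Polynomial.X ^ kComp ends F

/-- `D = T_e^f T_f^e − T_{ef} T^{ef}`. -/
noncomputable def Dpoly (ends : E → Sym2 V) (e f : E) :
    Polynomial (MvPolynomial E ℤ) :=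
  Tab ends {e} {f} * Tab ends {f} {e} - Tab ends {e, f} ∅ * Tab ends ∅ {e, f}

/-- The combinatorial sum
`S = Σ_{(β,γ) disjoint ⊆ E^{ef}} x^β x^γ Σ_{d ∈ B_{β,γ}} x^d`. -/
noncomputable def Ssum (ends : E → Sym2 V) (e f : E) : MvPolynomial E ℤ := by
  classical
  exact ∑ p ∈ Finset.univ.filter (fun p : Finset E × Finset E =>
      p.1 ⊆ Eef e f ∧ p.2 ⊆ Eef e f ∧ Disjoint p.1 p.2),
    xF p.1 * xF p.2 * ∑ d ∈ Bfin ends e f p.1 p.2, xPow d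

/-- `k₁(A,B) = k(A+e) + k(B+f)`. -/
noncomputable def kOne (ends : E → Sym2 V) (e f : E) (A B : Finset E) : ℕ :=
  kComp ends (insert e A) + kComp ends (insert f B)

/-- `k₂(A,B) = k(A+e+f) + k(B)`. -/
noncomputable def kTwo (ends : E → Sym2 V) (e f : E) (A B : Finset E) : ℕ :=
  kComp ends (insert f (insert e A)) + kComp ends B

/-- The coefficient of the monomial `x^lam` in an element of
`(MvPolynomial E ℤ)[q]`, as an element of `ℤ[q]`. -/
noncomputable def monCoeff (P : Polynomial (MvPolynomial E ℤ)) (lam : E →₀ ℕ) :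
    Polynomial ℤ :=
  P.sum fun n c => Polynomial.C (MvPolynomial.coeff lam c) * Polynomial.X ^ n

end Defs

section Aux13
open Finset
variable {V E : Type*} [DecidableEq E] {ends : E → Sym2 V}

lemma etaGraph_mono {F F' : Finset E} (h : F ⊆ F') :
    etaGraph ends F ≤ etaGraph ends F' := by
  intro v w hvw
  obtain ⟨hne, g, hg, hends⟩ := hvw
  exact ⟨hne, g, h hg, hends⟩

lemma joins_mono {G G' : SimpleGraph V} (h : G ≤ G') {s : Sym2 V} {a b : V}
    (hj : Joins G s a b) : Joins G' s a b := by
  obtain ⟨u, v, hs, hau, hbv⟩ := hj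
  exact ⟨u, v, hs, hau.mono h, hbv.mono h⟩

lemma joins_joins {G : SimpleGraph V} {s : Sym2 V} {a b a' b' : V}
    (h : Joins G s a b) (h' : Joins G s a' b') :
    (G.Reachable a a' ∧ G.Reachable b b') ∨ (G.Reachable a b' ∧ G.Reachable b a') := by
  obtain ⟨u, v, hs, hau, hbv⟩ := h
  obtain ⟨u', v', hs', hau', hbv'⟩ := h'
  rw [hs] at hs'
  rcases Sym2.eq_iff.mp hs' with ⟨h1, h2⟩ | ⟨h1, h2⟩
  · subst h1; subst h2
    exact Or.inl ⟨hau.trans hau'.symm, hbv.trans hbv'.symm⟩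
  · subst h1; subst h2
    exact Or.inr ⟨hau.trans hbv'.symm, hbv.trans hau'.symm⟩

lemma joins_transfer {G : SimpleGraph V} {s t : Sym2 V} {a b a2 b2 : V}
    (hs : Joins G s a b) (hs2 : Joins G s a2 b2) (ht2 : Joins G t a2 b2) :
    Joins G t a b := by
  obtain ⟨p, q, hpq, h2p, h2q⟩ := ht2
  rcases joins_joins hs hs2 with ⟨h1, h2⟩ | ⟨h1, h2⟩
  · exact ⟨p, q, hpq, h1.trans h2p, h2.trans h2q⟩
  · exact ⟨q, p, by rw [hpq, Sym2.eq_swap], h1.trans h2q, h2.trans h2p⟩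

lemma reach_union_closed {γ δ : Finset E} {c : V}
    (h : ∀ g ∈ δ, ∀ x y : V, x ≠ y → ends g = s(x, y) →
      (etaGraph ends γ).Reachable c x → (etaGraph ends γ).Reachable c y) :
    ∀ {x y : V}, (etaGraph ends (γ ∪ δ)).Reachable x y →
      (etaGraph ends γ).Reachable c x → (etaGraph ends γ).Reachable c y := by
  suffices h' : ∀ x y (w : (etaGraph ends (γ ∪ δ)).Walk x y),
      (etaGraph ends γ).Reachable c x → (etaGraph ends γ).Reachable c y by
    intro x y hr hx
    obtain ⟨w⟩ := hr
    exact h' x y w hx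
  intro x y w
  induction w with
  | nil => exact id
  | cons hadj p ih =>
    intro hx
    obtain ⟨hne, g, hg, hends⟩ := hadj
    rcases Finset.mem_union.mp hg with hgγ | hgδ
    · exact ih ((hx.trans (SimpleGraph.Adj.reachable ⟨hne, g, hgγ, hends⟩)))
    · exact ih (h g hgδ _ _ hne hends hx)

lemma mem_Eef {e f g : E} [Fintype E] : g ∈ Eef e f ↔ g ≠ e ∧ g ≠ f := by
  simp [Eef, not_or]

end Aux13

/-- for every paracel `γ` there is exactly one pair `(β, d)` with
`β ⊆ E^{ef}` disjoint from `γ` and `d ∈ B_{β,γ}` such that `1_β + 1_γ + d` is `1` on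
all of `E^{ef}` and `0` at `e` and `f`. -/
theorem stmt13 {V E : Type*} [Fintype V] [Fintype E] [DecidableEq E]
    (ends : E → Sym2 V) (e f : E) (hef : e ≠ f)
    (γ : Finset E) (hγ : IsParacel ends e f γ) :
    ∃! p : Finset E × (E → ℕ),
      p.1 ⊆ Eef e f ∧ Disjoint p.1 γ ∧ p.2 ∈ Bset ends e f p.1 γ ∧
      (∀ g ∈ Eef e f, indic p.1 g + indic γ g + p.2 g = 1) ∧
      indic p.1 e + indic γ e + p.2 e = 0 ∧
      indic p.1 f + indic γ f + p.2 f = 0 := by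
  classical
  obtain ⟨he, hf, a, b, hab, hea, hfa⟩ := hγ
  set β : Finset E := (Eef e f).filter
    (fun g => g ∉ γ ∧ Joins (etaGraph ends γ) (ends g) a b) with hβdef
  set R : Finset E := (Eef e f) \ (γ ∪ β) with hRdef
  set α : Finset E := R.filter
    (fun g => ∃ u v : V, ends g = s(u, v) ∧ (etaGraph ends γ).Reachable a u) with hαdef
  set A' : Finset E := R \ α with hA'def
  have hβE : β ⊆ Eef e f := Finset.filter_subset _ _
  have hRE : R ⊆ Eef e f := Finset.sdiff_subset
  have hαR : α ⊆ R := Finset.filter_subset _ _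
  have hA'R : A' ⊆ R := Finset.sdiff_subset
  have hβmem : ∀ g ∈ β, g ∈ Eef e f ∧ g ∉ γ ∧ Joins (etaGraph ends γ) (ends g) a b := by
    intro g hg
    exact ⟨(Finset.mem_filter.mp hg).1, (Finset.mem_filter.mp hg).2⟩
  have hβγ : Disjoint β γ := by
    rw [Finset.disjoint_left]
    intro g hg hgγ
    exact (hβmem g hg).2.1 hgγ
  have hRγ : ∀ g ∈ R, g ∉ γ := by
    intro g hg
    have h2 := (Finset.mem_sdiff.mp hg).2
    exact fun hc => h2 (Finset.mem_union_left _ hc)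
  have hRβ : ∀ g ∈ R, g ∉ β := by
    intro g hg
    have h2 := (Finset.mem_sdiff.mp hg).2
    exact fun hc => h2 (Finset.mem_union_right _ hc)
  have heE : e ∉ Eef e f := by simp [mem_Eef]
  have hfE : f ∉ Eef e f := by simp [mem_Eef]
  have heβ : e ∉ β := fun h => heE (hβE h)
  have hfβ : f ∉ β := fun h => hfE (hβE h)
  have heα : e ∉ α := fun h => heE (hRE (hαR h))
  have hfα : f ∉ α := fun h => hfE (hRE (hαR h))
  have heA' : e ∉ A' := fun h => heE (hRE (hA'R h))
  have hfA' : f ∉ A' := fun h => hfE (hRE (hA'R h))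
  -- reachability control
  have hA'reach : ∀ {x y : V}, (etaGraph ends (γ ∪ A')).Reachable x y →
      (etaGraph ends γ).Reachable a x → (etaGraph ends γ).Reachable a y := by
    refine reach_union_closed ?_
    intro g hg x y hxy hends hax
    exfalso
    have hgα : g ∉ α := (Finset.mem_sdiff.mp hg).2
    exact hgα (Finset.mem_filter.mpr ⟨(Finset.mem_sdiff.mp hg).1, x, y, hends, hax⟩)
  have hαreach : ∀ {x y : V}, (etaGraph ends (γ ∪ α)).Reachable x y →
      (etaGraph ends γ).Reachable b x → (etaGraph ends γ).Reachable b y := by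
    refine reach_union_closed ?_
    intro g hg x y hxy hends hbx
    exfalso
    obtain ⟨hgR, u, v, huv, hau⟩ := Finset.mem_filter.mp hg
    rcases Sym2.eq_iff.mp (huv.symm.trans hends) with ⟨h1, h2⟩ | ⟨h1, h2⟩
    · rw [h1] at hau
      exact hab (hau.trans hbx.symm)
    · rw [h1] at hau
      apply hRβ g hgR
      refine Finset.mem_filter.mpr ⟨hRE hgR, hRγ g hgR, y, x, ?_, hau, hbx⟩
      rw [hends, Sym2.eq_swap]
  have hnotα : ¬ (etaGraph ends (γ ∪ α)).Reachable a b := by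
    intro h
    exact hab (hαreach h.symm (SimpleGraph.Reachable.refl b)).symm
  have hnotA' : ¬ (etaGraph ends (γ ∪ A')).Reachable a b := by
    intro h
    exact hab (hA'reach h (SimpleGraph.Reachable.refl a))
  have hmonoα : etaGraph ends γ ≤ etaGraph ends (γ ∪ α) :=
    etaGraph_mono Finset.subset_union_left
  have hmonoA' : etaGraph ends γ ≤ etaGraph ends (γ ∪ A') :=
    etaGraph_mono Finset.subset_union_left
  have hPα : IsParacel ends e f (γ ∪ α) :=
    ⟨fun h => (Finset.mem_union.mp h).elim he heα,
     fun h => (Finset.mem_union.mp h).elim hf hfα,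
     a, b, hnotα, joins_mono hmonoα hea, joins_mono hmonoα hfa⟩
  have hPA' : IsParacel ends e f (γ ∪ A') :=
    ⟨fun h => (Finset.mem_union.mp h).elim he heA',
     fun h => (Finset.mem_union.mp h).elim hf hfA',
     a, b, hnotA', joins_mono hmonoA' hea, joins_mono hmonoA' hfa⟩
  have hSα : ∀ g ∈ β, IsSmoot ends e f (γ ∪ α) g := by
    intro g hg
    obtain ⟨hgE, hgγ, hgJ⟩ := hβmem g hg
    have hgα : g ∉ α := fun h => hRβ g (hαR h) hg
    exact ⟨fun h => (Finset.mem_union.mp h).elim hgγ hgα,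
      (mem_Eef.mp hgE).1, (mem_Eef.mp hgE).2, a, b, hnotα,
      joins_mono hmonoα hea, joins_mono hmonoα hfa, joins_mono hmonoα hgJ⟩
  have hSA' : ∀ g ∈ β, IsSmoot ends e f (γ ∪ A') g := by
    intro g hg
    obtain ⟨hgE, hgγ, hgJ⟩ := hβmem g hg
    have hgA' : g ∉ A' := fun h => hRβ g (hA'R h) hg
    exact ⟨fun h => (Finset.mem_union.mp h).elim hgγ hgA',
      (mem_Eef.mp hgE).1, (mem_Eef.mp hgE).2, a, b, hnotA',
      joins_mono hmonoA' hea, joins_mono hmonoA' hfa, joins_mono hmonoA' hgJ⟩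
  have hP0 : IsParacel ends e f γ := ⟨he, hf, a, b, hab, hea, hfa⟩
  have hS0 : ∀ g ∈ β, IsSmoot ends e f γ g := by
    intro g hg
    obtain ⟨hgE, hgγ, hgJ⟩ := hβmem g hg
    exact ⟨hgγ, (mem_Eef.mp hgE).1, (mem_Eef.mp hgE).2, a, b, hab, hea, hfa, hgJ⟩
  have hCα : Compatible ends e f β γ α :=
    ⟨heα, hfα, Finset.disjoint_left.mpr (fun {g} hg hgβ => hRβ _ (hαR hg) hgβ),
     Finset.disjoint_left.mpr (fun {g} hg => hRγ _ (hαR hg)), hPα, hSα⟩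
  have hCA' : Compatible ends e f β γ A' :=
    ⟨heA', hfA', Finset.disjoint_left.mpr (fun {g} hg hgβ => hRβ _ (hA'R hg) hgβ),
     Finset.disjoint_left.mpr (fun {g} hg => hRγ _ (hA'R hg)), hPA', hSA'⟩
  have hC0 : Compatible ends e f β γ ∅ :=
    ⟨Finset.notMem_empty e, Finset.notMem_empty f, Finset.disjoint_empty_left β,
     Finset.disjoint_empty_left γ,
     by rw [Finset.union_empty]; exact hP0,
     by rw [Finset.union_empty]; exact hS0⟩
  have hint : α ∩ A' = ∅ := Finset.inter_sdiff_self α R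
  have hdB : (indic α + indic A') ∈ Bset ends e f β γ :=
    ⟨α, A', hCα, hCA', by rw [hint]; exact hC0, rfl⟩
  have hpart : ∀ g ∈ Eef e f, indic β g + indic γ g + (indic α g + indic A' g) = 1 := by
    intro g hgE
    by_cases hgγ : g ∈ γ
    · have hgβ : g ∉ β := fun h => (hβmem g h).2.1 hgγ
      have hgR : g ∉ R := fun h => hRγ g h hgγ
      have hgα : g ∉ α := fun h => hgR (hαR h)
      have hgA' : g ∉ A' := fun h => hgR (hA'R h)
      simp [indic, hgγ, hgβ, hgα, hgA']
    · by_cases hgβ : g ∈ β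
      · have hgR : g ∉ R := fun h => hRβ g h hgβ
        have hgα : g ∉ α := fun h => hgR (hαR h)
        have hgA' : g ∉ A' := fun h => hgR (hA'R h)
        simp [indic, hgγ, hgβ, hgα, hgA']
      · have hgR : g ∈ R := Finset.mem_sdiff.mpr
          ⟨hgE, fun h => (Finset.mem_union.mp h).elim hgγ hgβ⟩
        by_cases hgα : g ∈ α
        · have hgA' : g ∉ A' := fun h => (Finset.mem_sdiff.mp h).2 hgα
          simp [indic, hgγ, hgβ, hgα, hgA']
        · have hgA' : g ∈ A' := Finset.mem_sdiff.mpr ⟨hgR, hgα⟩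
          simp [indic, hgγ, hgβ, hgα, hgA']
  refine ⟨⟨β, indic α + indic A'⟩, ⟨hβE, hβγ, hdB, ?_, ?_, ?_⟩, ?_⟩
  · intro g hg
    simpa using hpart g hg
  · simp [indic, he, heβ, heα, heA']
  · simp [indic, hf, hfβ, hfα, hfA']
  -- uniqueness
  rintro ⟨β', d'⟩ ⟨hsub, hdisj, hB, hone, he0, hf0⟩
  obtain ⟨α1, α2, hC1, hC2, hC12, hd'⟩ := hB
  subst hd'
  have hα1E : ∀ g ∈ α1, g ∈ Eef e f := fun g hg =>
    mem_Eef.mpr ⟨fun h => hC1.1 (h ▸ hg), fun h => hC1.2.1 (h ▸ hg)⟩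
  have h12 : α1 ∩ α2 = ∅ := by
    rw [Finset.eq_empty_iff_forall_notMem]
    intro g hg
    obtain ⟨hg1, hg2⟩ := Finset.mem_inter.mp hg
    have hgβ' : g ∉ β' := Finset.disjoint_left.mp hC1.2.2.1 hg1
    have hgγ : g ∉ γ := Finset.disjoint_left.mp hC1.2.2.2.1 hg1
    have h1 := hone g (hα1E g hg1)
    simp [indic, hg1, hg2, hgβ', hgγ] at h1
  rw [h12] at hC12
  have hS0' : ∀ g ∈ β', IsSmoot ends e f γ g := by
    intro g hg
    have h := hC12.2.2.2.2.2 g hg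
    rwa [Finset.union_empty] at h
  have hββ : β' = β := by
    ext g
    constructor
    · intro hg
      obtain ⟨hg0, hge, hgf, a2, b2, h2ab, h2e, h2f, h2g⟩ := hS0' g hg
      exact Finset.mem_filter.mpr
        ⟨mem_Eef.mpr ⟨hge, hgf⟩, hg0, joins_transfer hea h2e h2g⟩
    · intro hg
      obtain ⟨hgE, hgγ, hgJ⟩ := hβmem g hg
      by_contra hgβ'
      have key : ∀ αi : Finset E, Compatible ends e f β' γ αi → g ∉ αi := by
        intro αi hC hgαi
        obtain ⟨heu, hfu, a1, b1, h1ab, h1e, h1f⟩ := hC.2.2.2.2.1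
        obtain ⟨u, v, huv, hau, hbv⟩ := hgJ
        have hne : u ≠ v := by
          intro h
          rw [h] at hau
          exact hab (hau.trans hbv.symm)
        have hmono : etaGraph ends γ ≤ etaGraph ends (γ ∪ αi) :=
          etaGraph_mono Finset.subset_union_left
        have hreach : (etaGraph ends (γ ∪ αi)).Reachable a b :=
          ((hau.mono hmono).trans (SimpleGraph.Adj.reachable
            ⟨hne, g, Finset.mem_union_right _ hgαi, huv⟩)).trans (hbv.mono hmono).symm
        rcases joins_joins h1e (joins_mono hmono hea) with ⟨ha1, hb1⟩ | ⟨ha1, hb1⟩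
        · exact h1ab ((ha1.trans hreach).trans hb1.symm)
        · exact h1ab ((ha1.trans hreach.symm).trans hb1.symm)
      have hg1 : g ∉ α1 := key α1 hC1
      have hg2 : g ∉ α2 := key α2 hC2
      have h1 := hone g hgE
      simp [indic, hgγ, hgβ', hg1, hg2] at h1
  have hd : (indic α1 + indic α2) = (indic α + indic A') := by
    funext g
    by_cases hgE : g ∈ Eef e f
    · have h1 := hone g hgE
      have h2 := hpart g hgE
      rw [hββ] at h1
      simp only [Pi.add_apply] at h1 ⊢
      omega
    · have hg : g = e ∨ g = f := by
        by_contra hc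
        push_neg at hc
        exact hgE (mem_Eef.mpr hc)
      rcases hg with rfl | rfl
      · have hαz : indic α g = 0 := by simp [indic, heα]
        have hA'z : indic A' g = 0 := by simp [indic, heA']
        simp only [Pi.add_apply] at he0 ⊢
        omega
      · have hαz : indic α g = 0 := by simp [indic, hfα]
        have hA'z : indic A' g = 0 := by simp [indic, hfA']
        simp only [Pi.add_apply] at hf0 ⊢
        omega
  rw [hββ, hd]
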